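/- arXiv:math/0505442 — 5 statements merged into one kernel-verified Lean document; each statement's English description precedes it below -/
import Mathlib

section
/- Let p and q be coprime positive integers with p odd, 0 < p < q, and q divisible by 4. Then the integer sum S = Σ_{j=1}^{(q-2)/2} (-1)^{⌊2jp/q⌋} is odd. (In the paper this sum equals minus the linking number lk(K_i, λ_i) of equation (1), and its oddness shows λ_i is never the preferred longitude of the 2-bridge link L_{p/q} when 4 divides q.) -/
open Finset

theorem Int.odd_coe_unit (u : ℤˣ) : Odd (u : ℤ) := by
  rcases Int.units_eq_one_or u with rfl | rfl <;> decide

theorem Finset.odd_sum_of_odd_card {ι : Type*} {s : Finset ι} {f : ι → ℤ}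
    (hf : ∀ i ∈ s, Odd (f i)) (hs : Odd #s) : Odd (∑ i ∈ s, f i) := by
  rw [← ZMod.intCast_eq_one_iff_odd, Int.cast_sum,
    sum_congr rfl fun i hi => ZMod.intCast_eq_one_iff_odd.2 (hf i hi), sum_const, nsmul_one,
    ZMod.natCast_eq_one_iff_odd]
  exact hs

theorem stmt_0_general (p q : ℕ) (hlt : p < q) (h4 : 4 ∣ q) :
    Odd (∑ j ∈ Finset.Icc 1 ((q - 2) / 2),
      ((Int.negOnePow ⌊(2 * j * p : ℚ) / (q : ℚ)⌋ : ℤˣ) : ℤ)) := by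
  obtain ⟨k, rfl⟩ := h4
  refine odd_sum_of_odd_card (fun j _ => Int.odd_coe_unit _) ?_
  rw [Nat.card_Icc]
  exact ⟨k - 1, by omega⟩

/-- For coprime positive integers `p`, `q` with `p` odd, `0 < p < q`, and `4 ∣ q`,
the sum `S = ∑_{j=1}^{(q-2)/2} (-1)^⌊2jp/q⌋` is odd. -/
theorem stmt_0 (p q : ℕ) (hp : 0 < p) (hlt : p < q) (hcop : Nat.Coprime p q)
    (hodd : Odd p) (h4 : 4 ∣ q) :
    Odd (∑ j ∈ Finset.Icc 1 ((q - 2) / 2),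
      ((Int.negOnePow ⌊(2 * j * p : ℚ) / (q : ℚ)⌋ : ℤˣ) : ℤ)) :=
  stmt_0_general p q hlt h4
end

section
/- For every positive integer k, Σ_{j=1}^{4k-1} (-1)^{⌊ j(4k-1)/(4k) ⌋} = 1. Equivalently, taking p = 4k-1 and q = 8k, the sum Σ_{j=1}^{(q-2)/2} (-1)^{⌊2jp/q⌋} equals 1, so that equation (1) of the paper gives lk(λ_1, K_1) = lk(λ_2, K_2) = -1 for the 2-bridge links L_{(4k-1)/(8k)} for all k. -/
/-! Since `j (q - 1) / q = j - j / q` with `0 < j / q ≤ 1` for `1 ≤ j ≤ q`, the floor is `j - 1`;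
for `q = 4k` the sum is therefore `1 - 1 + ⋯ + 1` with an odd number `4k - 1` of terms. -/

theorem Int.floor_natCast_mul_sub_one_div {K : Type*} [Field K] [LinearOrder K]
    [IsStrictOrderedRing K] [FloorRing K] {j : ℕ} {q : K} (hj : 1 ≤ j) (hjq : (j : K) ≤ q) :
    ⌊(j * (q - 1) : K) / q⌋ = (j : ℤ) - 1 := by
  have hj' : (1 : K) ≤ j := by exact_mod_cast hj
  have hq : 0 < q := by linarith
  rw [Int.floor_eq_iff, le_div_iff₀ hq, div_lt_iff₀ hq]
  push_cast
  constructor <;> nlinarith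

theorem Finset.sum_Icc_one_negOnePow_sub_one_of_odd {n : ℕ} (hn : Odd n) :
    ∑ j ∈ Finset.Icc 1 n, ((((j : ℤ) - 1).negOnePow : ℤˣ) : ℤ) = 1 := by
  have hshift : ∀ m : ℕ, ∑ j ∈ Finset.Icc 1 m, ((((j : ℤ) - 1).negOnePow : ℤˣ) : ℤ)
      = ∑ i ∈ Finset.range m, (-1 : ℤ) ^ i := by
    intro m
    induction m with
    | zero => rfl
    | succ m ih =>
      rw [Finset.sum_Icc_succ_top (by omega), ih, Finset.sum_range_succ]
      push_cast
      rw [add_sub_cancel_right, Int.coe_negOnePow_natCast]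
  rw [hshift, neg_one_geom_sum, if_neg (Nat.not_even_iff_odd.mpr hn)]

/-- For every positive integer `k`, `∑_{j=1}^{4k-1} (-1)^⌊j(4k-1)/(4k)⌋ = 1`.
With `p = 4k-1`, `q = 8k` this says `∑_{j=1}^{(q-2)/2} (-1)^⌊2jp/q⌋ = 1`, so that
`lk(λᵢ, Kᵢ) = -1` for the 2-bridge links `L_{(4k-1)/(8k)}`. -/
theorem stmt_1 (k : ℕ) (hk : 0 < k) :
    ∑ j ∈ Finset.Icc 1 (4 * k - 1),
      ((Int.negOnePow ⌊(j * (4 * k - 1) : ℚ) / (4 * k : ℚ)⌋ : ℤˣ) : ℤ) = 1 := by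
  have hfloor : ∀ j ∈ Finset.Icc 1 (4 * k - 1),
      ⌊(j * (4 * k - 1) : ℚ) / (4 * k : ℚ)⌋ = (j : ℤ) - 1 := fun j hj => by
    rw [Finset.mem_Icc] at hj
    exact Int.floor_natCast_mul_sub_one_div hj.1 (by exact_mod_cast (by omega : j ≤ 4 * k))
  rw [Finset.sum_congr rfl fun j hj => by rw [hfloor j hj]]
  exact Finset.sum_Icc_one_negOnePow_sub_one_of_odd ⟨2 * k - 1, by omega⟩
end

section
/- For every point z in the upper half-plane ℍ there exists a matrix g in Γ₀(2) such that the Möbius image g·z lies in the closed ideal triangle with vertices 0, 1, and ∞, i.e. 0 ≤ Re(g·z) ≤ 1 and |g·z - 1/2| ≥ 1/2. (This is the covering half of the paper's assertion that the ideal triangle {1/0, 0/1, 1/1} is a fundamental domain for the action of G on ℍ².) -/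
open UpperHalfPlane ModularGroup
open scoped MatrixGroups

/-!
Among the elements of `Γ₀(2)` pick one, `g`, that maximizes `Im (g • z)`; such a maximizer exists
because `Im (g • z) = Im z / |c z + d|²` and `|c z + d|` tends to infinity on coprime bottom rows.
Translating by a power of `T` keeps `g` in `Γ₀(2)` and `Im (g • z)` unchanged, and brings
`0 ≤ Re (g • z) < 1`. If `g • z` were inside the disc `|w - 1/2| < 1/2`, the element
`W = [[1, -1], [2, -1]]` of `Γ₀(2)`, whose isometric circle is that disc, would raise the imaginary
part further, contradicting maximality.
-/

lemma exists_max_im_smul_of_dvd_lower_left (N : ℤ) (z : ℍ) :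
    ∃ g : SL(2, ℤ), N ∣ g 1 0 ∧
      ∀ g' : SL(2, ℤ), N ∣ g' 1 0 → (g' • z).im ≤ (g • z).im := by
  let s : Set (Fin 2 → ℤ) := {cd | IsCoprime (cd 0) (cd 1) ∧ N ∣ cd 0}
  have hs : s.Nonempty := ⟨![0, 1], by simp [s, isCoprime_zero_left]⟩
  obtain ⟨p, ⟨hp_coprime, hp_dvd⟩, hp⟩ :=
    Filter.Tendsto.exists_within_forall_le hs (tendsto_normSq_coprime_pair z)
  obtain ⟨g, -, hg⟩ := bottom_row_surj hp_coprime
  refine ⟨g, by simpa [← hg] using hp_dvd, fun g' hg' => ?_⟩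
  rw [ModularGroup.im_smul_eq_div_normSq, ModularGroup.im_smul_eq_div_normSq,
    div_le_div_iff_of_pos_left z.im_pos (normSq_denom_pos g' z.im_ne_zero)
      (normSq_denom_pos g z.im_ne_zero)]
  simpa [denom_apply, ← hg] using hp (g' 1) ⟨bottom_row_coprime g', hg'⟩

lemma exists_zpow_T_smul_re_mem_Ico (w : ℍ) :
    ∃ n : ℤ, 0 ≤ (T ^ n • w).re ∧ (T ^ n • w).re < 1 := by
  refine ⟨-⌊w.re⌋, ?_, ?_⟩ <;> rw [re_T_zpow_smul] <;> push_cast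
  · linarith [Int.floor_le w.re]
  · linarith [Int.lt_floor_add_one w.re]

lemma im_lt_im_smul_of_norm_denom_lt_one {g : SL(2, ℤ)} {w : ℍ} (h : ‖denom g w‖ < 1) :
    w.im < (g • w).im := by
  have hpos : 0 < Complex.normSq (denom g w) := normSq_denom_pos g w.im_ne_zero
  have hlt : Complex.normSq (denom g w) < 1 := by
    rw [Complex.normSq_eq_norm_sq]
    nlinarith [norm_nonneg (denom g w)]
  rw [ModularGroup.im_smul_eq_div_normSq, lt_div_iff₀ hpos]
  nlinarith [w.im_pos]

/-- The order-two elliptic element `w ↦ (w - 1) / (2w - 1)` of `Γ₀(2)`, fixing `(1 + i) / 2`;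
its isometric circle is `|w - 1/2| = 1/2`. -/
def W : SL(2, ℤ) :=
  ⟨!![1, -1; 2, -1], by norm_num [Matrix.det_fin_two_of]⟩

lemma W_mul_apply_one_zero (g : SL(2, ℤ)) : (W * g) 1 0 = 2 * g 0 0 - g 1 0 := by
  rw [Matrix.SpecialLinearGroup.coe_mul, Matrix.mul_apply, Fin.sum_univ_two]
  norm_num [W, sub_eq_add_neg]

lemma denom_W (w : ℍ) : denom W w = 2 * ((w : ℂ) - 1 / 2) := by
  rw [ModularGroup.denom_apply]
  norm_num [W]
  ring

lemma im_lt_im_W_smul {w : ℍ} (h : ‖(w : ℂ) - 1 / 2‖ < 1 / 2) : w.im < (W • w).im := by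
  apply im_lt_im_smul_of_norm_denom_lt_one
  rw [denom_W, norm_mul, Complex.norm_two]
  linarith

/-- Every point of the upper half-plane can be moved by an element of `Γ₀(2)`
(the subgroup of `SL(2,ℤ)` with even lower-left entry) into the closed ideal
triangle with vertices `0`, `1`, `∞`:
`0 ≤ Re(g·z) ≤ 1` and `|g·z - 1/2| ≥ 1/2`. -/
theorem stmt_2 (z : UpperHalfPlane) :
    ∃ g : Matrix.SpecialLinearGroup (Fin 2) ℤ, Even (g.1 1 0) ∧
      0 ≤ (g • z).re ∧ (g • z).re ≤ 1 ∧
      (1 : ℝ) / 2 ≤ ‖((g • z : UpperHalfPlane) : ℂ) - 1 / 2‖ := by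
  obtain ⟨g₀, hg₀, hmax⟩ := exists_max_im_smul_of_dvd_lower_left 2 z
  obtain ⟨n, hre₀, hre₁⟩ := exists_zpow_T_smul_re_mem_Ico (g₀ • z)
  set g := T ^ n * g₀
  have hg : 2 ∣ g 1 0 := by rwa [T_pow_mul_apply_one]
  have him : (g • z).im = (g₀ • z).im := by rw [mul_smul, im_T_zpow_smul]
  rw [← mul_smul] at hre₀ hre₁
  refine ⟨g, even_iff_two_dvd.2 hg, hre₀, hre₁.le, ?_⟩
  by_contra! hlt
  have hWg : 2 ∣ (W * g) 1 0 := by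
    rw [W_mul_apply_one_zero]
    exact dvd_sub (dvd_mul_right 2 _) hg
  have hle := hmax (W * g) hWg
  rw [mul_smul] at hle
  linarith [im_lt_im_W_smul hlt]
end

section
/- Let z be a point of the upper half-plane lying in the open ideal triangle with vertices 0, 1, ∞, i.e. 0 < Re z < 1 and |z - 1/2| > 1/2. If g ∈ Γ₀(2) is such that g·z also lies in this open region, then g = ±I (and consequently g·z = z). (This is the uniqueness half of the paper's assertion that the ideal triangle {1/0, 0/1, 1/1} is a fundamental domain for the action of G on ℍ².) -/
/-!
For `g = (a b; c d) ∈ Γ₀(2)` with `c ≠ 0`, the entry `c` is even, so `d` and `c + d` are odd.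
For `z = x + iy` in the triangle, `x < x² + y²` and `0 < x < 1` give
`|cz + d|² > c²x + 2cdx + d² = x (c + d)² + (1 - x) d² ≥ 1`, hence `Im (g·z) < Im z`.
Since `g⁻¹ ∈ Γ₀(2)` has lower-left entry `-c ≠ 0`, the same applies to `g⁻¹` at `g·z`,
which is absurd. So `c = 0`, `g = ±Tⁿ` translates by `n`, and both real parts lie in `(0, 1)`,
forcing `n = 0`.
-/

open UpperHalfPlane ModularGroup Matrix.SpecialLinearGroup
open scoped MatrixGroups

def idealTriangle : Set ℍ := {z | 0 < z.re ∧ z.re < 1 ∧ (1 : ℝ) / 2 < ‖(z : ℂ) - 1 / 2‖}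

lemma re_lt_re_sq_add_im_sq_of_mem_idealTriangle {z : ℍ} (hz : z ∈ idealTriangle) :
    z.re < z.re ^ 2 + z.im ^ 2 := by
  have h := mul_self_lt_mul_self (by norm_num) hz.2.2
  rw [Complex.norm_mul_self_eq_normSq, Complex.normSq_apply] at h
  simp only [Complex.sub_re, Complex.sub_im, coe_re, coe_im] at h
  norm_num at h
  nlinarith

lemma one_lt_sq_add_sq {x y : ℝ} {c d : ℤ} (hx₀ : 0 ≤ x) (hx₁ : x ≤ 1)
    (hxy : x < x ^ 2 + y ^ 2) (hc : c ≠ 0) (hd : d ≠ 0) (hcd : c + d ≠ 0) :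
    1 < (c * x + d) ^ 2 + (c * y) ^ 2 := by
  have one_le_sq {n : ℤ} (hn : n ≠ 0) : (1 : ℝ) ≤ (n : ℝ) ^ 2 := by
    exact_mod_cast (one_le_sq_iff_one_le_abs n).mpr (Int.one_le_abs hn)
  have hd₁ := one_le_sq hd
  have hcd₁ := one_le_sq hcd
  push_cast at hcd₁
  have hpos : 0 < (c : ℝ) ^ 2 * (x ^ 2 + y ^ 2 - x) := by
    have : (0 : ℝ) < (c : ℝ) ^ 2 := by positivity
    nlinarith
  calc (1 : ℝ) ≤ x * (c + d) ^ 2 + (1 - x) * d ^ 2 := by nlinarith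
    _ < (c : ℝ) ^ 2 * (x ^ 2 + y ^ 2 - x) + (x * (c + d) ^ 2 + (1 - x) * d ^ 2) := by linarith
    _ = (c * x + d) ^ 2 + (c * y) ^ 2 := by ring

lemma odd_d_of_even_c (g : SL(2, ℤ)) (hc : Even (g 1 0)) : Odd (g 1 1) := by
  have hdet : g 0 0 * g 1 1 = g 0 1 * g 1 0 + 1 := by
    have := g.det_coe
    rw [Matrix.det_fin_two] at this
    linarith
  have had : Odd (g 0 0 * g 1 1) := hdet ▸ (hc.mul_left _).add_one
  exact (Int.odd_mul.mp had).2

lemma im_smul_lt_im_of_mem_idealTriangle {g : SL(2, ℤ)} {z : ℍ} (hz : z ∈ idealTriangle)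
    (hc : Even (g 1 0)) (hc₀ : g 1 0 ≠ 0) : (g • z).im < z.im := by
  have ne_zero_of_odd {n : ℤ} (hn : Odd n) : n ≠ 0 := by rintro rfl; simp at hn
  have hd := odd_d_of_even_c g hc
  have hdenom : 1 < Complex.normSq (denom g z) := by
    rw [denom_apply, Complex.normSq_apply]
    simp only [Complex.add_re, Complex.add_im, Complex.mul_re, Complex.mul_im,
      Complex.intCast_re, Complex.intCast_im, coe_re, coe_im]
    convert one_lt_sq_add_sq hz.1.le hz.2.1.le (re_lt_re_sq_add_im_sq_of_mem_idealTriangle hz)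
      hc₀ (ne_zero_of_odd hd) (ne_zero_of_odd (hc.add_odd hd)) using 1
    ring
  rw [ModularGroup.im_smul_eq_div_normSq]
  exact div_lt_self z.im_pos hdenom

lemma c_eq_zero_of_mem_idealTriangle {g : SL(2, ℤ)} {z : ℍ} (hz : z ∈ idealTriangle)
    (hgz : g • z ∈ idealTriangle) (hc : Even (g 1 0)) : g 1 0 = 0 := by
  by_contra hc₀
  have hinv : (g⁻¹ : SL(2, ℤ)) 1 0 = -g 1 0 := by simp [SL2_inv_expl]
  have hlt := im_smul_lt_im_of_mem_idealTriangle hz hc hc₀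
  have hlt' := im_smul_lt_im_of_mem_idealTriangle hgz (hinv ▸ hc.neg) (by simpa [hinv] using hc₀)
  rw [inv_smul_smul] at hlt'
  exact hlt.not_gt hlt'

lemma exists_eq_T_zpow_or_eq_neg_T_zpow_of_c_eq_zero {g : SL(2, ℤ)} (hc : g 1 0 = 0) :
    ∃ n : ℤ, g = T ^ n ∨ g = -T ^ n := by
  have had : g 0 0 * g 1 1 = 1 := by
    have := g.det_coe
    rw [Matrix.det_fin_two, hc] at this
    linarith
  rcases Int.eq_one_or_neg_one_of_mul_eq_one' had with ⟨ha, hd⟩ | ⟨ha, hd⟩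
  · refine ⟨g 0 1, Or.inl ?_⟩
    ext i j
    fin_cases i <;> fin_cases j <;> simp [ha, hc, hd, coe_T_zpow]
  · refine ⟨-g 0 1, Or.inr ?_⟩
    ext i j
    fin_cases i <;> fin_cases j <;> simp [ha, hc, hd, coe_T_zpow]

lemma eq_one_or_eq_neg_one_of_c_eq_zero {g : SL(2, ℤ)} {z : ℍ} (hc : g 1 0 = 0)
    (hz : z.re ∈ Set.Ioo 0 1) (hgz : (g • z).re ∈ Set.Ioo 0 1) : g = 1 ∨ g = -1 := by
  obtain ⟨n, hn⟩ := exists_eq_T_zpow_or_eq_neg_T_zpow_of_c_eq_zero hc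
  have hre : (g • z).re = z.re + n := by
    rcases hn with rfl | rfl <;> simp only [SL_neg_smul, re_T_zpow_smul]
  have hn₀ : n = 0 := by
    have h₁ : (-1 : ℝ) < n := by linarith [hz.2, hgz.1]
    have h₂ : (n : ℝ) < 1 := by linarith [hz.1, hgz.2]
    have : -1 < n ∧ n < 1 := ⟨mod_cast h₁, mod_cast h₂⟩
    omega
  simpa [hn₀] using hn

/-- If `z` lies in the open ideal triangle with vertices `0`, `1`, `∞`
(`0 < Re z < 1`, `|z - 1/2| > 1/2`) and `g ∈ Γ₀(2)` is such that `g·z` also lies in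
this open region, then `g = ±I`, and consequently `g·z = z`. -/
theorem stmt_3 (z : UpperHalfPlane)
    (h1 : 0 < z.re) (h2 : z.re < 1)
    (h3 : (1 : ℝ) / 2 < ‖(z : ℂ) - 1 / 2‖)
    (g : Matrix.SpecialLinearGroup (Fin 2) ℤ) (hg : Even (g.1 1 0))
    (h1' : 0 < (g • z).re) (h2' : (g • z).re < 1)
    (h3' : (1 : ℝ) / 2 < ‖((g • z : UpperHalfPlane) : ℂ) - 1 / 2‖) :
    (g.1 = 1 ∨ g.1 = -1) ∧ g • z = z := by
  have hc := c_eq_zero_of_mem_idealTriangle ⟨h1, h2, h3⟩ ⟨h1', h2', h3'⟩ hg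
  rcases eq_one_or_eq_neg_one_of_c_eq_zero hc ⟨h1, h2⟩ ⟨h1', h2'⟩ with rfl | rfl
  · simp
  · exact ⟨Or.inr (by simp), by rw [SL_neg_smul, one_smul]⟩
end

section
/- Let (a,b) and (c,d) be pairs of coprime integers with b ≥ 0, d ≥ 0, and |ad - bc| = 1 (so the reduced fractions a/b and c/d span an edge of the Farey diagram D₁). Then: (i) b and d are not both even; (ii) if exactly one of b, d is even, then there exists g ∈ Γ₀(2) carrying the unordered pair of projective points {(a,b), (c,d)} to the unordered pair {(1,0), (0,1)}, i.e. the edge lies in the Γ₀(2)-orbit of the edge from 1/0 to 0/1; (iii) if b and d are both odd, then there exists g ∈ Γ₀(2) carrying {(a,b), (c,d)} to {(0,1), (1,1)}, i.e. the edge lies in the Γ₀(2)-orbit of the edge from 0/1 to 1/1. (This identifies the two Γ₀(2)-orbits of edges of the Farey diagram D₁, called the A-type and C-type edges in the paper.) -/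
/-- The linear action of `SL(2,ℤ)` on integer pairs. -/
def matAct (g : Matrix.SpecialLinearGroup (Fin 2) ℤ) (v : ℤ × ℤ) : ℤ × ℤ :=
  (g.1 0 0 * v.1 + g.1 0 1 * v.2, g.1 1 0 * v.1 + g.1 1 1 * v.2)

/-- Equality of integer pairs as points of `ℙ¹(ℚ)`, i.e. up to a common sign. -/
def projEq (v w : ℤ × ℤ) : Prop :=
  v = w ∨ v = (-w.1, -w.2)

/-- Build an element of `SL(2,ℤ)` from four entries with determinant 1. -/
def mkSL (p q r s : ℤ) (h : p * s - q * r = 1) :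
    Matrix.SpecialLinearGroup (Fin 2) ℤ :=
  ⟨!![p, q; r, s], by simp [Matrix.det_fin_two_of]; linarith⟩

lemma mkSL_act (p q r s : ℤ) (h : p * s - q * r = 1) (x y : ℤ) :
    matAct (mkSL p q r s h) (x, y) = (p * x + q * y, r * x + s * y) := by
  simp [matAct, mkSL]

lemma mkSL_lowleft (p q r s : ℤ) (h : p * s - q * r = 1) :
    (mkSL p q r s h).1 1 0 = r := by
  simp [mkSL]

/-- Let `(a,b)` and `(c,d)` be coprime pairs with `b, d ≥ 0` and `|ad - bc| = 1`
(an edge of the Farey diagram `D₁`). Then: (i) `b`, `d` are not both even;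
(ii) if exactly one of `b`, `d` is even, some `g ∈ Γ₀(2)` carries the unordered pair
of projective points `{(a,b),(c,d)}` to `{(1,0),(0,1)}` (an A-type edge);
(iii) if `b`, `d` are both odd, some `g ∈ Γ₀(2)` carries `{(a,b),(c,d)}` to
`{(0,1),(1,1)}` (a C-type edge). -/
theorem stmt_6 (a b c d : ℤ) (hab : IsCoprime a b) (hcd : IsCoprime c d)
    (hb : 0 ≤ b) (hd : 0 ≤ d) (hdet : |a * d - b * c| = 1) :
    (¬ (Even b ∧ Even d)) ∧
    ((Even b ↔ ¬ Even d) →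
      ∃ g : Matrix.SpecialLinearGroup (Fin 2) ℤ, Even (g.1 1 0) ∧
        ((projEq (matAct g (a, b)) (1, 0) ∧ projEq (matAct g (c, d)) (0, 1)) ∨
         (projEq (matAct g (a, b)) (0, 1) ∧ projEq (matAct g (c, d)) (1, 0)))) ∧
    (Odd b → Odd d →
      ∃ g : Matrix.SpecialLinearGroup (Fin 2) ℤ, Even (g.1 1 0) ∧
        ((projEq (matAct g (a, b)) (0, 1) ∧ projEq (matAct g (c, d)) (1, 1)) ∨
         (projEq (matAct g (a, b)) (1, 1) ∧ projEq (matAct g (c, d)) (0, 1)))) := by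
  rcases abs_eq (by norm_num : (0:ℤ) ≤ 1) |>.mp hdet with he | he
  · refine ⟨?_, ?_, ?_⟩
    · rintro ⟨hb2, hd2⟩
      have h1 : Even (a * d - b * c) := (hd2.mul_left a).sub (hb2.mul_right c)
      rcases h1 with ⟨k, hk⟩; omega
    · intro hpar
      by_cases hEb : Even b
      · -- b even, d odd; g = [d, -c; -b, a]
        refine ⟨mkSL d (-c) (-b) a (by linarith), ?_, Or.inl ⟨?_, ?_⟩⟩
        · rw [mkSL_lowleft]; exact hEb.neg
        · left; rw [mkSL_act]; ext <;> simp <;> linarith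
        · left; rw [mkSL_act]; ext <;> simp <;> linarith
      · -- b odd, d even; g = [-b, a; -d, c]
        have hEd : Even d := not_not.mp (fun h => hEb (hpar.mpr h))
        refine ⟨mkSL (-b) a (-d) c (by linarith), ?_, Or.inr ⟨?_, ?_⟩⟩
        · rw [mkSL_lowleft]; exact hEd.neg
        · right; rw [mkSL_act]; ext <;> simp <;> linarith
        · left; rw [mkSL_act]; ext <;> simp <;> linarith
    · intro hob hod
      -- both odd, det = 1; g = [b, -a; d+b, -c-a]
      refine ⟨mkSL b (-a) (d + b) (-c - a) (by ring_nf; linarith), ?_,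
        Or.inl ⟨?_, ?_⟩⟩
      · rw [mkSL_lowleft]
        rcases hob with ⟨k, hk⟩; rcases hod with ⟨m, hm⟩
        exact ⟨m + k + 1, by omega⟩
      · left; rw [mkSL_act]; ext <;> simp <;> linarith
      · right; rw [mkSL_act]; ext <;> simp <;> linarith
  · refine ⟨?_, ?_, ?_⟩
    · rintro ⟨hb2, hd2⟩
      have h1 : Even (a * d - b * c) := (hd2.mul_left a).sub (hb2.mul_right c)
      rcases h1 with ⟨k, hk⟩; omega
    · intro hpar
      by_cases hEb : Even b
      · -- b even, d odd; g = [-d, c; -b, a]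
        refine ⟨mkSL (-d) c (-b) a (by linarith), ?_, Or.inl ⟨?_, ?_⟩⟩
        · rw [mkSL_lowleft]; exact hEb.neg
        · left; rw [mkSL_act]; ext <;> simp <;> linarith
        · right; rw [mkSL_act]; ext <;> simp <;> linarith
      · -- b odd, d even; g = [b, -a; -d, c]
        have hEd : Even d := not_not.mp (fun h => hEb (hpar.mpr h))
        refine ⟨mkSL b (-a) (-d) c (by linarith), ?_, Or.inr ⟨?_, ?_⟩⟩
        · rw [mkSL_lowleft]; exact hEd.neg
        · left; rw [mkSL_act]; ext <;> simp <;> linarith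
        · left; rw [mkSL_act]; ext <;> simp <;> linarith
    · intro hob hod
      -- both odd, det = -1; g = [b, -a; b-d, c-a]
      refine ⟨mkSL b (-a) (b - d) (c - a) (by ring_nf; linarith), ?_,
        Or.inl ⟨?_, ?_⟩⟩
      · rw [mkSL_lowleft]
        rcases hob with ⟨k, hk⟩; rcases hod with ⟨m, hm⟩
        exact ⟨k - m, by omega⟩
      · left; rw [mkSL_act]; ext <;> simp <;> linarith
      · left; rw [mkSL_act]; ext <;> simp <;> linarith
end
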